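/- Worst-case sensitivity dilation via second-order bounds composed with flow evaluation: let x̲ ≤ x̄ in ℝⁿ, let Φ : [x̲,x̄] → ℝⁿ be twice continuously differentiable on the box with second-order differential D(DΦ)(x) ∈ ℝ^{n×n²} satisfying Sxx̲ ≤ D(DΦ)(x) ≤ Sxx̄ entrywise for all x ∈ [x̲,x̄]. Let Y ⊆ [x̲,x̄] be a nonempty finite set with dispersion d(Y), and M_{ij} = Σ_k max(|Sxx̲|,|Sxx̄|)_{i,(j−1)n+k} d(Y). Define S̄_{ij} = max_{y∈Y} (DΦ(y))_{ij} + M_{ij} and S̲_{ij} = min_{y∈Y} (DΦ(y))_{ij} − M_{ij}. Then S̲ ≤ DΦ(x) ≤ S̄ entrywise for all x ∈ [x̲,x̄], and consequently the mixed-monotonicity bounds of Lemma 9 built from [S̲, S̄] satisfy g(x̲,x̄) ≤ Φ(w) ≤ g(x̄,x̲) componentwise for all w ∈ [x̲,x̄]. -/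
import Mathlib


/-- The dispersion `d(Y) = sup_{x∈[x̲,x̄]} min_{y∈Y} ‖x−y‖_∞` of a finite set of samples
`Y` in the box `[x̲,x̄]` (the norm on `Fin n → ℝ` is the sup norm `‖·‖_∞`). -/
noncomputable def dispersion {n : ℕ} (xl xu : Fin n → ℝ) (Y : Finset (Fin n → ℝ)) : ℝ :=
  sSup ((fun x => sInf ((fun y => ‖x - y‖) '' (Y : Set (Fin n → ℝ)))) '' Set.Icc xl xu)

/-- The vertex `z^i(x,y)` of the mixed-monotonicity decomposition: component `j` is `x_j`
if `S*_{ij} = (S̲_{ij}+S̄_{ij})/2 ≥ 0`, and `y_j` otherwise. -/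
noncomputable def mmVertex {n : ℕ} (Sl Su : Fin n → Fin n → ℝ) (i : Fin n)
    (x y : Fin n → ℝ) : Fin n → ℝ :=
  fun j => if 0 ≤ (Sl i j + Su i j) / 2 then x j else y j

/-- The coefficient row vector `α^i` of the mixed-monotonicity decomposition: component `j`
is `max(0, −S̲_{ij})` if `S*_{ij} = (S̲_{ij}+S̄_{ij})/2 ≥ 0`, and `max(0, S̄_{ij})`
otherwise. -/
noncomputable def mmAlpha {n : ℕ} (Sl Su : Fin n → Fin n → ℝ) (i j : Fin n) : ℝ :=
  if 0 ≤ (Sl i j + Su i j) / 2 then max 0 (-Sl i j) else max 0 (Su i j)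

/-- The decomposition function `g_i(x,y) = Φ_i(z^i(x,y)) + α^i (x − y)`. -/
noncomputable def mmG {n : ℕ} (Φ : (Fin n → ℝ) → Fin n → ℝ) (Sl Su : Fin n → Fin n → ℝ)
    (i : Fin n) (x y : Fin n → ℝ) : ℝ :=
  Φ (mmVertex Sl Su i x y) i + ∑ j : Fin n, mmAlpha Sl Su i j * (x j - y j)

lemma mvt_lower {φ ψ : ℝ → ℝ} {C : ℝ}
    (h : ∀ t ∈ Set.Icc (0:ℝ) 1, HasDerivWithinAt φ (ψ t) (Set.Icc 0 1) t)
    (hb : ∀ t ∈ Set.Icc (0:ℝ) 1, C ≤ ψ t) :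
    C ≤ φ 1 - φ 0 := by
  have hd : ∀ t ∈ interior (Set.Icc (0:ℝ) 1), HasDerivAt φ (ψ t) t := fun t ht =>
    (h t (interior_subset ht)).hasDerivAt (mem_interior_iff_mem_nhds.mp ht)
  have := (convex_Icc (0:ℝ) 1).mul_sub_le_image_sub_of_le_deriv
    (fun t ht => (h t ht).continuousWithinAt)
    (fun t ht => ((hd t ht).differentiableAt).differentiableWithinAt)
    (fun t ht => (hd t ht).deriv ▸ hb t (interior_subset ht))
    0 (by norm_num) 1 (by norm_num) (by norm_num)
  linarith

lemma mvt_upper {φ ψ : ℝ → ℝ} {C : ℝ}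
    (h : ∀ t ∈ Set.Icc (0:ℝ) 1, HasDerivWithinAt φ (ψ t) (Set.Icc 0 1) t)
    (hb : ∀ t ∈ Set.Icc (0:ℝ) 1, ψ t ≤ C) :
    φ 1 - φ 0 ≤ C := by
  have := mvt_lower (φ := fun t => -φ t) (ψ := fun t => -ψ t) (C := -C)
    (fun t ht => (h t ht).neg) (fun t ht => neg_le_neg (hb t ht))
  simp at this; linarith

lemma lin_eval {n : ℕ} (L : (Fin n → ℝ) →L[ℝ] ℝ) (v : Fin n → ℝ) :
    L v = ∑ j, v j * L (Pi.single j 1) := by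
  have hv : v = ∑ j, v j • (Pi.single j (1:ℝ) : Fin n → ℝ) := by
    ext k
    simp [Finset.sum_apply, Pi.single_apply]
  nth_rw 1 [hv]
  rw [map_sum]
  simp [smul_eq_mul]

/-- **Worst-case sensitivity dilation via second-order bounds composed with flow
evaluation** (steps 3 and 4 of Algorithm 1): let `Φ : [x̲,x̄] → ℝⁿ` be twice continuously
differentiable on the box, with Jacobian entries `DΦ(x)_{ij}` and second-order differential
`D(DΦ)(x)` (block convention: entry `(i,(j,k))` is `∂²Φ_i/∂x_k∂x_j`) bounded entrywise by
`Sxx̲ ≤ D(DΦ)(x) ≤ Sxx̄`. Given a nonempty finite sample set `Y ⊆ [x̲,x̄]`, with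
`M_{ij} = Σ_k max(|Sxx̲|,|Sxx̄|)_{i,(j,k)} d(Y)`,
`S̄_{ij} = max_{y∈Y} DΦ(y)_{ij} + M_{ij}` and `S̲_{ij} = min_{y∈Y} DΦ(y)_{ij} − M_{ij}`,
one has `S̲ ≤ DΦ(x) ≤ S̄` entrywise on the box, and consequently the mixed-monotonicity
bounds of Lemma 9 built from `[S̲,S̄]` satisfy `g(x̲,x̄) ≤ Φ(w) ≤ g(x̄,x̲)` componentwise
for all `w ∈ [x̲,x̄]`. -/
theorem sampled_sensitivity_reachability {n : ℕ}
    (xl xu : Fin n → ℝ) (hx : xl ≤ xu)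
    (Φ : (Fin n → ℝ) → Fin n → ℝ)
    (DΦ : (Fin n → ℝ) → Fin n → Fin n → ℝ)
    -- `Φ` is differentiable on the box with Jacobian entries `DΦ x i j`
    (hΦ1 : ∀ x ∈ Set.Icc xl xu, ∀ i : Fin n,
      ∃ L : (Fin n → ℝ) →L[ℝ] ℝ,
        HasFDerivWithinAt (fun w => Φ w i) L (Set.Icc xl xu) x ∧
        ∀ j, L (Pi.single j 1) = DΦ x i j)
    (Sxxl Sxxu : Fin n → Fin n → Fin n → ℝ)
    -- the Jacobian entries are (continuously) differentiable on the box, with the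
    -- second-order differential `D(DΦ)` bounded entrywise by `[Sxx̲, Sxx̄]`
    (hΦ2 : ∀ x ∈ Set.Icc xl xu, ∀ (i j : Fin n),
      ∃ L : (Fin n → ℝ) →L[ℝ] ℝ,
        HasFDerivWithinAt (fun z => DΦ z i j) L (Set.Icc xl xu) x ∧
        ∀ k, Sxxl i j k ≤ L (Pi.single k 1) ∧ L (Pi.single k 1) ≤ Sxxu i j k)
    (Y : Finset (Fin n → ℝ)) (hY : Y.Nonempty) (hYsub : ↑Y ⊆ Set.Icc xl xu)
    (M Sl Su : Fin n → Fin n → ℝ)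
    (hM : ∀ i j, M i j = ∑ k : Fin n, max |Sxxl i j k| |Sxxu i j k| * dispersion xl xu Y)
    (hSu : ∀ i j, Su i j = (Y.sup' hY fun y => DΦ y i j) + M i j)
    (hSl : ∀ i j, Sl i j = (Y.inf' hY fun y => DΦ y i j) - M i j) :
    (∀ x ∈ Set.Icc xl xu, ∀ i j, Sl i j ≤ DΦ x i j ∧ DΦ x i j ≤ Su i j) ∧
    (∀ w ∈ Set.Icc xl xu, ∀ i : Fin n,
      mmG Φ Sl Su i xl xu ≤ Φ w i ∧ Φ w i ≤ mmG Φ Sl Su i xu xl) := by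
  classical
  obtain ⟨y0, hy0⟩ := hY
  -- every point of the box has a sample within distance `dispersion`
  have hdisp : ∀ x ∈ Set.Icc xl xu, ∃ y ∈ Y, ‖x - y‖ ≤ dispersion xl xu Y := by
    intro x hxm
    have hfin : ((fun y => ‖x - y‖) '' (Y : Set (Fin n → ℝ))).Finite :=
      Y.finite_toSet.image _
    have hne : ((fun y => ‖x - y‖) '' (Y : Set (Fin n → ℝ))).Nonempty :=
      ⟨_, Set.mem_image_of_mem _ hy0⟩
    obtain ⟨y, hyY, hyeq⟩ := hne.csInf_mem hfin
    refine ⟨y, hyY, ?_⟩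
    have hbdd : BddAbove ((fun x => sInf ((fun y => ‖x - y‖) '' (Y : Set (Fin n → ℝ)))) ''
        Set.Icc xl xu) := by
      refine ⟨‖xu - xl‖, ?_⟩
      rintro r ⟨x', hx', rfl⟩
      have hblo : BddBelow ((fun y => ‖x' - y‖) '' (Y : Set (Fin n → ℝ))) :=
        ⟨0, by rintro r ⟨y', _, rfl⟩; exact norm_nonneg _⟩
      have h1 : sInf ((fun y => ‖x' - y‖) '' (Y : Set (Fin n → ℝ))) ≤ ‖x' - y0‖ :=
        csInf_le hblo (Set.mem_image_of_mem _ hy0)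
      have h2 : ‖x' - y0‖ ≤ ‖xu - xl‖ := by
        rw [pi_norm_le_iff_of_nonneg (norm_nonneg _)]
        intro j
        have hy0b := hYsub hy0
        have h3 : ‖(xu - xl) j‖ ≤ ‖xu - xl‖ := norm_le_pi_norm (xu - xl) j
        have e1 := hx'.1 j; have e2 := hx'.2 j
        have e3 := hy0b.1 j; have e4 := hy0b.2 j
        simp only [Pi.sub_apply, Real.norm_eq_abs] at h3 ⊢
        rw [abs_le]
        have h4 : xu j - xl j ≤ |xu j - xl j| := le_abs_self _
        constructor <;> linarith
      linarith
    have h5 : ‖x - y‖ = sInf ((fun y => ‖x - y‖) '' (Y : Set (Fin n → ℝ))) := hyeq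
    rw [h5]
    exact le_csSup hbdd ⟨x, hxm, rfl⟩
  -- Part 1
  have hpart1 : ∀ x ∈ Set.Icc xl xu, ∀ i j, Sl i j ≤ DΦ x i j ∧ DΦ x i j ≤ Su i j := by
    intro x hxm i j
    set C := ∑ k : Fin n, max |Sxxl i j k| |Sxxu i j k| with hC
    have hC0 : 0 ≤ C := Finset.sum_nonneg fun k _ =>
      le_trans (abs_nonneg _) (le_max_left _ _)
    choose! D hD1 hD2 using hΦ2
    have hbound : ∀ p ∈ Set.Icc xl xu, ‖D p i j‖ ≤ C := by
      intro p hp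
      refine ContinuousLinearMap.opNorm_le_bound _ hC0 ?_
      intro v
      rw [Real.norm_eq_abs, lin_eval]
      calc |∑ k, v k * (D p i j) (Pi.single k 1)|
          ≤ ∑ k, |v k * (D p i j) (Pi.single k 1)| := Finset.abs_sum_le_sum_abs _ _
        _ ≤ ∑ k, max |Sxxl i j k| |Sxxu i j k| * ‖v‖ := by
            refine Finset.sum_le_sum fun k _ => ?_
            rw [abs_mul]
            obtain ⟨hlo, hhi⟩ := hD2 p hp i j k
            have h1 : |(D p i j) (Pi.single k 1)| ≤ max |Sxxl i j k| |Sxxu i j k| := by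
              rw [abs_le]
              constructor
              · have := neg_abs_le (Sxxl i j k)
                have := le_max_left |Sxxl i j k| |Sxxu i j k|
                linarith
              · have := le_abs_self (Sxxu i j k)
                have := le_max_right |Sxxl i j k| |Sxxu i j k|
                linarith
            have h2 : |v k| ≤ ‖v‖ := by
              have := norm_le_pi_norm v k
              rwa [Real.norm_eq_abs] at this
            calc |v k| * |(D p i j) (Pi.single k 1)|
                ≤ ‖v‖ * (max |Sxxl i j k| |Sxxu i j k|) :=
                  mul_le_mul h2 h1 (abs_nonneg _) (norm_nonneg _)
              _ = max |Sxxl i j k| |Sxxu i j k| * ‖v‖ := by ring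
        _ = C * ‖v‖ := (Finset.sum_mul ..).symm
    obtain ⟨y, hyY, hyd⟩ := hdisp x hxm
    have hmvt : ‖DΦ x i j - DΦ y i j‖ ≤ C * ‖x - y‖ :=
      Convex.norm_image_sub_le_of_norm_hasFDerivWithin_le
        (fun p hp => hD1 p hp i j) hbound (convex_Icc xl xu) (hYsub hyY) hxm
    have hCd : C * ‖x - y‖ ≤ M i j := by
      rw [hM i j, ← Finset.sum_mul]
      exact mul_le_mul_of_nonneg_left hyd hC0
    have habs : |DΦ x i j - DΦ y i j| ≤ M i j := by
      rw [Real.norm_eq_abs] at hmvt; linarith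
    obtain ⟨hab1, hab2⟩ := abs_le.mp habs
    constructor
    · rw [hSl i j]
      have hinf : Y.inf' ⟨y0, hy0⟩ (fun y => DΦ y i j) ≤ DΦ y i j :=
        Finset.inf'_le (fun y => DΦ y i j) hyY
      linarith
    · rw [hSu i j]
      have hsup : DΦ y i j ≤ Y.sup' ⟨y0, hy0⟩ (fun y => DΦ y i j) :=
        Finset.le_sup' (fun y => DΦ y i j) hyY
      linarith
  refine ⟨hpart1, ?_⟩
  -- Part 2
  intro w hw i
  choose! D hD1 hD2 using hΦ1
  have hmaps : ∀ z ∈ Set.Icc xl xu,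
      Set.MapsTo (fun t : ℝ => w + t • (z - w)) (Set.Icc 0 1) (Set.Icc xl xu) := by
    intro z hz t ht
    constructor <;> intro j <;>
      simp only [Pi.add_apply, Pi.smul_apply, Pi.sub_apply, smul_eq_mul]
    · nlinarith [hw.1 j, hw.2 j, hz.1 j, hz.2 j, ht.1, ht.2]
    · nlinarith [hw.1 j, hw.2 j, hz.1 j, hz.2 j, ht.1, ht.2]
  have hline : ∀ z ∈ Set.Icc xl xu, ∀ t ∈ Set.Icc (0:ℝ) 1,
      HasDerivWithinAt (fun t => Φ (w + t • (z - w)) i)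
        (∑ j, (z j - w j) * DΦ (w + t • (z - w)) i j) (Set.Icc 0 1) t := by
    intro z hz t ht
    have hp : w + t • (z - w) ∈ Set.Icc xl xu := hmaps z hz ht
    have hγ : HasDerivWithinAt (fun t : ℝ => w + t • (z - w)) (z - w) (Set.Icc 0 1) t := by
      have h := ((hasDerivAt_id t).smul_const (z - w)).const_add w
      simpa using h.hasDerivWithinAt
    have hcomp := (hD1 _ hp i).comp_hasDerivWithinAt t hγ (hmaps z hz)
    have heq : (D (w + t • (z - w)) i) (z - w)
        = ∑ j, (z j - w j) * DΦ (w + t • (z - w)) i j := by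
      rw [lin_eval]
      refine Finset.sum_congr rfl fun j _ => ?_
      rw [hD2 _ hp i j]
      rfl
    rw [← heq]
    exact hcomp
  have main_lo : ∀ z ∈ Set.Icc xl xu, ∀ c : ℝ,
      (∀ p ∈ Set.Icc xl xu, c ≤ ∑ j, (z j - w j) * DΦ p i j) → c ≤ Φ z i - Φ w i := by
    intro z hz c hc
    have := mvt_lower (hline z hz) (fun t ht => hc _ (hmaps z hz ht))
    simpa using this
  have main_hi : ∀ z ∈ Set.Icc xl xu, ∀ c : ℝ,
      (∀ p ∈ Set.Icc xl xu, ∑ j, (z j - w j) * DΦ p i j ≤ c) → Φ z i - Φ w i ≤ c := by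
    intro z hz c hc
    have := mvt_upper (hline z hz) (fun t ht => hc _ (hmaps z hz ht))
    simpa using this
  have hxlm : xl ∈ Set.Icc xl xu := Set.left_mem_Icc.mpr hx
  have hxum : xu ∈ Set.Icc xl xu := Set.right_mem_Icc.mpr hx
  have hzmem : ∀ x y : Fin n → ℝ, x ∈ Set.Icc xl xu → y ∈ Set.Icc xl xu →
      mmVertex Sl Su i x y ∈ Set.Icc xl xu := by
    intro x y hx' hy'
    constructor <;> intro j <;> simp only [mmVertex] <;> split_ifs
    exacts [hx'.1 j, hy'.1 j, hx'.2 j, hy'.2 j]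
  constructor
  · -- lower bound : mmG xl xu ≤ Φ w i
    have hz : mmVertex Sl Su i xl xu ∈ Set.Icc xl xu := hzmem xl xu hxlm hxum
    have hterm : ∀ p ∈ Set.Icc xl xu, ∀ j,
        (mmVertex Sl Su i xl xu j - w j) * DΦ p i j ≤ mmAlpha Sl Su i j * (xu j - xl j) := by
      intro p hp j
      obtain ⟨hS1, hS2⟩ := hpart1 p hp i j
      have hw1 := hw.1 j; have hw2 := hw.2 j
      have h1 := le_max_left (0:ℝ) (-Sl i j); have h2 := le_max_right (0:ℝ) (-Sl i j)
      have h3 := le_max_left (0:ℝ) (Su i j); have h4 := le_max_right (0:ℝ) (Su i j)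
      simp only [mmVertex, mmAlpha]
      split_ifs with h
      · nlinarith [mul_nonneg (show (0:ℝ) ≤ w j - xl j by linarith)
            (show (0:ℝ) ≤ DΦ p i j + max 0 (-Sl i j) by linarith),
          mul_nonneg h1 (show (0:ℝ) ≤ xu j - w j by linarith)]
      · nlinarith [mul_nonneg (show (0:ℝ) ≤ xu j - w j by linarith)
            (show (0:ℝ) ≤ max 0 (Su i j) - DΦ p i j by linarith),
          mul_nonneg h3 (show (0:ℝ) ≤ w j - xl j by linarith)]
    have hc : ∀ p ∈ Set.Icc xl xu,
        ∑ j, (mmVertex Sl Su i xl xu j - w j) * DΦ p i j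
          ≤ ∑ j, mmAlpha Sl Su i j * (xu j - xl j) :=
      fun p hp => Finset.sum_le_sum fun j _ => hterm p hp j
    have hmain := main_hi _ hz _ hc
    have hneg : ∑ j, mmAlpha Sl Su i j * (xl j - xu j)
        = -∑ j, mmAlpha Sl Su i j * (xu j - xl j) := by
      rw [← Finset.sum_neg_distrib]
      exact Finset.sum_congr rfl fun j _ => by ring
    simp only [mmG]
    rw [hneg]
    linarith
  · -- upper bound : Φ w i ≤ mmG xu xl
    have hz : mmVertex Sl Su i xu xl ∈ Set.Icc xl xu := hzmem xu xl hxum hxlm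
    have hterm : ∀ p ∈ Set.Icc xl xu, ∀ j,
        -(mmAlpha Sl Su i j * (xu j - xl j))
          ≤ (mmVertex Sl Su i xu xl j - w j) * DΦ p i j := by
      intro p hp j
      obtain ⟨hS1, hS2⟩ := hpart1 p hp i j
      have hw1 := hw.1 j; have hw2 := hw.2 j
      have h1 := le_max_left (0:ℝ) (-Sl i j); have h2 := le_max_right (0:ℝ) (-Sl i j)
      have h3 := le_max_left (0:ℝ) (Su i j); have h4 := le_max_right (0:ℝ) (Su i j)
      simp only [mmVertex, mmAlpha]
      split_ifs with h
      · nlinarith [mul_nonneg (show (0:ℝ) ≤ xu j - w j by linarith)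
            (show (0:ℝ) ≤ DΦ p i j + max 0 (-Sl i j) by linarith),
          mul_nonneg h1 (show (0:ℝ) ≤ w j - xl j by linarith)]
      · nlinarith [mul_nonneg (show (0:ℝ) ≤ w j - xl j by linarith)
            (show (0:ℝ) ≤ max 0 (Su i j) - DΦ p i j by linarith),
          mul_nonneg h3 (show (0:ℝ) ≤ xu j - w j by linarith)]
    have hc : ∀ p ∈ Set.Icc xl xu,
        -∑ j, mmAlpha Sl Su i j * (xu j - xl j)
          ≤ ∑ j, (mmVertex Sl Su i xu xl j - w j) * DΦ p i j := by
      intro p hp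
      have := Finset.sum_le_sum fun j (_ : j ∈ Finset.univ) => hterm p hp j
      rwa [Finset.sum_neg_distrib] at this
    have hmain := main_lo _ hz _ hc
    simp only [mmG]
    linarith
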